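/- Let G be a uniform grid and let d,w ∈ [0,N] with d < w. Then Ev_{d,w} = (1/(w−d)!) · U_{d,d+1} ⋯ U_{w−1,w} · diag_w, where Ev_{d,w}(α,β) = Y^(α)(β) for α of weight d and β of weight w, U_{t,t+1} is the 0/1 comparability matrix between layers t and t+1, and diag_w = diag(α! : wt(α)=w). -/

import Mathlib

open scoped Classical

/-- The falling-factorial monomial `Y^(α)` evaluated at `β ∈ ℕⁿ` (equal to `α!·C(β,α)`). -/
noncomputable def Yeval (n : ℕ) (α β : Fin n → ℕ) : ℝ :=
  ∏ i, ∏ t ∈ Finset.range (α i), ((β i : ℝ) - (t : ℝ))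

/-- The up operator matrix between layers `t` and `t+1`, embedded as a matrix indexed by
the whole grid (zero outside of the two layers). -/
noncomputable def Umat (n : ℕ) (k : Fin n → ℕ) (t : ℕ) :
    Matrix (∀ i, Fin (k i)) (∀ i, Fin (k i)) ℝ := fun α β =>
  if (∑ i, (α i : ℕ)) = t ∧ (∑ i, (β i : ℕ)) = t + 1 ∧ (∀ i, (α i : ℕ) ≤ (β i : ℕ))
  then 1 else 0

/-- The evaluation matrix `Ev_{d,w}`, embedded as a matrix indexed by the whole grid. -/
noncomputable def EvMat (n : ℕ) (k : Fin n → ℕ) (d w : ℕ) :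
    Matrix (∀ i, Fin (k i)) (∀ i, Fin (k i)) ℝ := fun α β =>
  if (∑ i, (α i : ℕ)) = d ∧ (∑ i, (β i : ℕ)) = w
  then Yeval n (fun i => (α i : ℕ)) (fun i => (β i : ℕ)) else 0

namespace Stmt7Aux

lemma prod_range_cast (b a : ℕ) :
    ∏ t ∈ Finset.range a, ((b : ℝ) - (t : ℝ)) = (Nat.descFactorial b a : ℝ) := by
  induction a with
  | zero => simp
  | succ a ih =>
    rw [Finset.prod_range_succ, ih, Nat.descFactorial_succ]
    by_cases h : a ≤ b
    · push_cast [h]; ring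
    · have hz : Nat.descFactorial b a = 0 := Nat.descFactorial_eq_zero_iff_lt.mpr (by omega)
      rw [hz] at ih ⊢; simp [ih]

lemma Yeval_eq (n : ℕ) (α β : Fin n → ℕ) :
    Yeval n α β = ∏ i, (Nat.descFactorial (β i) (α i) : ℝ) :=
  Finset.prod_congr rfl fun i _ => prod_range_cast _ _

variable {n : ℕ} {k : Fin n → ℕ}

/-- `α` with coordinate `j` bumped by one (valid when `α j < β j`). -/
noncomputable def up (α β : ∀ i, Fin (k i)) (j : Fin n) : ∀ i, Fin (k i) :=
  fun i => if h : (α i : ℕ) < (β i : ℕ) ∧ i = j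
    then ⟨(α i : ℕ) + 1, lt_of_le_of_lt h.1 (β i).isLt⟩ else α i

lemma up_coe (α β : ∀ i, Fin (k i)) (j : Fin n) (hj : (α j : ℕ) < (β j : ℕ)) (i : Fin n) :
    ((up α β j) i : ℕ) = if i = j then (α i : ℕ) + 1 else (α i : ℕ) := by
  by_cases hij : i = j
  · subst hij; simp [up, hj]
  · simp [up, hij]

lemma wt_up (α β : ∀ i, Fin (k i)) (j : Fin n) (hj : (α j : ℕ) < (β j : ℕ)) :
    (∑ i, ((up α β j) i : ℕ)) = (∑ i, (α i : ℕ)) + 1 := by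
  have h : ∀ i, ((up α β j) i : ℕ) = (α i : ℕ) + (if i = j then 1 else 0) := by
    intro i; rw [up_coe α β j hj i]; split_ifs <;> simp
  simp only [h]
  rw [Finset.sum_add_distrib, Finset.sum_ite_eq' Finset.univ j (fun _ => 1)]
  simp

lemma key (d m : ℕ) (α β : ∀ i, Fin (k i)) :
    (((List.range (m + 1)).map (fun s => Umat n k (d + s))).prod) α β =
      if (∑ i, (α i : ℕ)) = d ∧ (∑ i, (β i : ℕ)) = d + (m + 1) ∧
          (∀ i, (α i : ℕ) ≤ (β i : ℕ))
      then ((m + 1).factorial : ℝ) / ∏ i, ((((β i : ℕ) - (α i : ℕ)).factorial : ℕ) : ℝ)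
      else 0 := by
  induction m generalizing d α with
  | zero =>
    have hr : List.range 1 = [0] := rfl
    simp only [hr, List.map_cons, List.map_nil, List.prod_cons, List.prod_nil,
      mul_one, Nat.add_zero]
    show Umat n k d α β = _
    unfold Umat
    split_ifs with h1
    · have hs : ∑ i, ((β i : ℕ) - (α i : ℕ)) = 1 := by
        rw [Finset.sum_tsub_distrib _ (fun i _ => h1.2.2 i)]; omega
      have hle : ∀ i, (β i : ℕ) - (α i : ℕ) ≤ 1 := by
        intro i
        calc (β i : ℕ) - (α i : ℕ) ≤ ∑ j, ((β j : ℕ) - (α j : ℕ)) :=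
              Finset.single_le_sum (f := fun j => (β j : ℕ) - (α j : ℕ))
                (fun _ _ => Nat.zero_le _) (Finset.mem_univ i)
          _ = 1 := hs
      have hf : ∀ i ∈ Finset.univ, ((((β i : ℕ) - (α i : ℕ)).factorial : ℕ) : ℝ) = 1 := by
        intro i _
        have := hle i
        interval_cases h : (β i : ℕ) - (α i : ℕ) <;> simp
      rw [Finset.prod_congr rfl hf]
      simp
    · rfl
  | succ m ih =>
    have hsplit : ((List.range (m + 2)).map (fun s => Umat n k (d + s))).prod =
        Umat n k d * ((List.range (m + 1)).map (fun s => Umat n k ((d + 1) + s))).prod := by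
      rw [List.range_succ_eq_map, List.map_cons, List.prod_cons, List.map_map]
      have hfe : ((fun s => Umat n k (d + s)) ∘ Nat.succ) = (fun s => Umat n k ((d + 1) + s)) := by
        funext s
        have hss : d + Nat.succ s = (d + 1) + s := by omega
        simp only [Function.comp_apply, hss]
      rw [hfe, Nat.add_zero]
    rw [hsplit, Matrix.mul_apply]
    by_cases hα : (∑ i, (α i : ℕ)) = d
    swap
    · rw [if_neg (by tauto)]
      apply Finset.sum_eq_zero
      intro γ _
      rw [show Umat n k d α γ = 0 by unfold Umat; rw [if_neg (by tauto)], zero_mul]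
    by_cases hβ : (∑ i, (β i : ℕ)) = d + (m + 2)
    swap
    · rw [if_neg (by intro h; exact hβ (by omega))]
      apply Finset.sum_eq_zero
      intro γ _
      rw [ih (d + 1) γ, if_neg (fun h : (∑ i, (γ i : ℕ)) = d + 1 ∧
        (∑ i, (β i : ℕ)) = d + 1 + (m + 1) ∧ (∀ i, (γ i : ℕ) ≤ (β i : ℕ)) =>
        absurd h.2.1 (by omega)), mul_zero]
    by_cases hab : ∀ i, (α i : ℕ) ≤ (β i : ℕ)
    swap
    · rw [if_neg (by tauto)]
      apply Finset.sum_eq_zero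
      intro γ _
      rw [ih (d + 1) γ]
      unfold Umat
      by_cases h2 : ∀ i, (γ i : ℕ) ≤ (β i : ℕ)
      · by_cases h3 : ∀ i, (α i : ℕ) ≤ (γ i : ℕ)
        · exact absurd (fun i => le_trans (h3 i) (h2 i)) hab
        · rw [if_neg (fun h : (∑ i, (α i : ℕ)) = d ∧ (∑ i, (γ i : ℕ)) = d + 1 ∧
            (∀ i, (α i : ℕ) ≤ (γ i : ℕ)) => h3 h.2.2), zero_mul]
      · rw [if_neg (fun h : (∑ i, (γ i : ℕ)) = d + 1 ∧
          (∑ i, (β i : ℕ)) = d + 1 + (m + 1) ∧ (∀ i, (γ i : ℕ) ≤ (β i : ℕ)) =>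
          h2 h.2.2), mul_zero]
    -- main case
    rw [if_pos ⟨hα, by omega, hab⟩]
    have hstep : ∀ γ : ∀ i, Fin (k i),
        Umat n k d α γ * (((List.range (m + 1)).map (fun s => Umat n k ((d + 1) + s))).prod) γ β =
        if ((∑ i, (γ i : ℕ)) = d + 1 ∧ (∀ i, (α i : ℕ) ≤ (γ i : ℕ)) ∧
            (∀ i, (γ i : ℕ) ≤ (β i : ℕ)))
        then ((m + 1).factorial : ℝ) / ∏ i, ((((β i : ℕ) - (γ i : ℕ)).factorial : ℕ) : ℝ)
        else 0 := by
      intro γ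
      rw [ih (d + 1) γ]
      unfold Umat
      by_cases hc : (∑ i, (γ i : ℕ)) = d + 1 ∧ (∀ i, (α i : ℕ) ≤ (γ i : ℕ)) ∧
          (∀ i, (γ i : ℕ) ≤ (β i : ℕ))
      · have hA : (∑ i, (α i : ℕ)) = d ∧ (∑ i, (γ i : ℕ)) = d + 1 ∧
            (∀ i, (α i : ℕ) ≤ (γ i : ℕ)) := ⟨hα, hc.1, hc.2.1⟩
        have hB : (∑ i, (γ i : ℕ)) = d + 1 ∧ (∑ i, (β i : ℕ)) = d + 1 + (m + 1) ∧
            (∀ i, (γ i : ℕ) ≤ (β i : ℕ)) := ⟨hc.1, by omega, hc.2.2⟩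
        rw [if_pos hc, if_pos hA, if_pos hB, one_mul]
      · rw [if_neg hc]
        by_cases h1 : (∑ i, (γ i : ℕ)) = d + 1
        · by_cases h2 : ∀ i, (α i : ℕ) ≤ (γ i : ℕ)
          · rw [if_neg (fun h : (∑ i, (γ i : ℕ)) = d + 1 ∧
              (∑ i, (β i : ℕ)) = d + 1 + (m + 1) ∧ (∀ i, (γ i : ℕ) ≤ (β i : ℕ)) =>
              hc ⟨h1, h2, h.2.2⟩), mul_zero]
          · rw [if_neg (fun h : (∑ i, (α i : ℕ)) = d ∧ (∑ i, (γ i : ℕ)) = d + 1 ∧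
              (∀ i, (α i : ℕ) ≤ (γ i : ℕ)) => h2 h.2.2), zero_mul]
        · rw [if_neg (fun h : (∑ i, (α i : ℕ)) = d ∧ (∑ i, (γ i : ℕ)) = d + 1 ∧
            (∀ i, (α i : ℕ) ≤ (γ i : ℕ)) => h1 h.2.1), zero_mul]
    simp only [hstep]
    rw [← Finset.sum_filter]
    -- identify the filtered set as an image
    set T : Finset (Fin n) := Finset.univ.filter (fun j => (α j : ℕ) < (β j : ℕ)) with hT
    have himg : Finset.univ.filter (fun γ : ∀ i, Fin (k i) =>
        (∑ i, (γ i : ℕ)) = d + 1 ∧ (∀ i, (α i : ℕ) ≤ (γ i : ℕ)) ∧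
        (∀ i, (γ i : ℕ) ≤ (β i : ℕ))) = T.image (up α β) := by
      ext γ
      simp only [Finset.mem_filter, Finset.mem_image, Finset.mem_univ, true_and, hT]
      constructor
      · rintro ⟨hw, hag, hgb⟩
        have hs : ∑ i, ((γ i : ℕ) - (α i : ℕ)) = 1 := by
          rw [Finset.sum_tsub_distrib _ (fun i _ => hag i)]; omega
        obtain ⟨j, hj⟩ : ∃ j, (γ j : ℕ) - (α j : ℕ) ≠ 0 := by
          by_contra h
          push_neg at h
          rw [Finset.sum_congr rfl (fun i _ => h i)] at hs
          simp at hs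
        have hrest : ∀ i, i ≠ j → (γ i : ℕ) - (α i : ℕ) = 0 := by
          intro i hi
          have h1 : (γ j : ℕ) - (α j : ℕ) + ∑ x ∈ Finset.univ.erase j, ((γ x : ℕ) - (α x : ℕ)) = 1 :=
            (Finset.add_sum_erase Finset.univ (fun x => (γ x : ℕ) - (α x : ℕ))
              (Finset.mem_univ j)).trans hs
          have h2 : ∑ x ∈ Finset.univ.erase j, ((γ x : ℕ) - (α x : ℕ)) = 0 := by omega
          have := (Finset.sum_eq_zero_iff).mp h2 i (Finset.mem_erase.mpr ⟨hi, Finset.mem_univ i⟩)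
          exact this
        have hgj : (γ j : ℕ) = (α j : ℕ) + 1 := by
          have := hag j
          have h2 : ∀ x ∈ Finset.univ.erase j, ((γ x : ℕ) - (α x : ℕ)) = 0 :=
            fun x hx => hrest x (Finset.mem_erase.mp hx).1
          have h1 : (γ j : ℕ) - (α j : ℕ) + ∑ x ∈ Finset.univ.erase j, ((γ x : ℕ) - (α x : ℕ)) = 1 :=
            (Finset.add_sum_erase Finset.univ (fun x => (γ x : ℕ) - (α x : ℕ))
              (Finset.mem_univ j)).trans hs
          rw [Finset.sum_congr rfl h2] at h1
          simp at h1
          omega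
        have hjT : (α j : ℕ) < (β j : ℕ) := by
          have := hgb j; omega
        refine ⟨j, hjT, ?_⟩
        funext i
        apply Fin.ext
        rw [up_coe α β j hjT i]
        by_cases hij : i = j
        · subst hij; rw [if_pos rfl]; omega
        · rw [if_neg hij]
          have := hrest i hij
          have := hag i
          omega
      · rintro ⟨j, hj, rfl⟩
        refine ⟨by rw [wt_up α β j hj, hα], ?_, ?_⟩
        · intro i
          rw [up_coe α β j hj i]
          split_ifs with h
          · subst h; omega
          · exact le_refl _
        · intro i
          rw [up_coe α β j hj i]
          split_ifs with h
          · subst h; omega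
          · exact hab i
    rw [himg, Finset.sum_image (by
      intro x hx y hy hxy
      by_contra hne
      have hx' : (α x : ℕ) < (β x : ℕ) := (Finset.mem_filter.mp hx).2
      have hy' : (α y : ℕ) < (β y : ℕ) := (Finset.mem_filter.mp hy).2
      have h1 : ((up α β x) x : ℕ) = (α x : ℕ) + 1 := by rw [up_coe α β x hx' x, if_pos rfl]
      have h2 : ((up α β y) x : ℕ) = (α x : ℕ) := by rw [up_coe α β y hy' x, if_neg hne]
      rw [hxy] at h1
      omega)]
    -- evaluate each summand
    have hterm : ∀ j ∈ T, ((m + 1).factorial : ℝ) /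
        ∏ i, ((((β i : ℕ) - ((up α β j) i : ℕ)).factorial : ℕ) : ℝ) =
        (((β j : ℕ) - (α j : ℕ) : ℕ) : ℝ) *
          (((m + 1).factorial : ℝ) / ∏ i, ((((β i : ℕ) - (α i : ℕ)).factorial : ℕ) : ℝ)) := by
      intro j hj
      have hj' : (α j : ℕ) < (β j : ℕ) := (Finset.mem_filter.mp hj).2
      have hP1 : ∏ i, ((((β i : ℕ) - ((up α β j) i : ℕ)).factorial : ℕ) : ℝ) =
          ((((β j : ℕ) - (α j : ℕ) - 1).factorial : ℕ) : ℝ) *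
            ∏ i ∈ Finset.univ.erase j, ((((β i : ℕ) - (α i : ℕ)).factorial : ℕ) : ℝ) := by
        rw [← Finset.mul_prod_erase Finset.univ _ (Finset.mem_univ j)]
        congr 1
        · have he : (β j : ℕ) - ((α j : ℕ) + 1) = (β j : ℕ) - (α j : ℕ) - 1 := by omega
          rw [up_coe α β j hj' j, if_pos rfl, he]
        · apply Finset.prod_congr rfl
          intro i hi
          rw [up_coe α β j hj' i, if_neg (Finset.mem_erase.mp hi).1]
      have hP2 : ∏ i, ((((β i : ℕ) - (α i : ℕ)).factorial : ℕ) : ℝ) =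
          ((((β j : ℕ) - (α j : ℕ)).factorial : ℕ) : ℝ) *
            ∏ i ∈ Finset.univ.erase j, ((((β i : ℕ) - (α i : ℕ)).factorial : ℕ) : ℝ) :=
        (Finset.mul_prod_erase Finset.univ _ (Finset.mem_univ j)).symm
      have hc : ((β j : ℕ) - (α j : ℕ)).factorial =
          ((β j : ℕ) - (α j : ℕ)) * ((β j : ℕ) - (α j : ℕ) - 1).factorial := by
        have : (β j : ℕ) - (α j : ℕ) = ((β j : ℕ) - (α j : ℕ) - 1) + 1 := by omega
        rw [this, Nat.factorial_succ]
        congr 2 <;> omega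
      rw [hP1, hP2, hc]
      have h0 : (((((β j : ℕ) - (α j : ℕ) - 1)).factorial : ℕ) : ℝ) ≠ 0 := by
        exact_mod_cast (Nat.factorial_pos _).ne'
      have h1 : (∏ i ∈ Finset.univ.erase j, ((((β i : ℕ) - (α i : ℕ)).factorial : ℕ) : ℝ)) ≠ 0 :=
        Finset.prod_ne_zero_iff.mpr (fun i _ => by exact_mod_cast (Nat.factorial_pos _).ne')
      have h2 : ((((β j : ℕ) - (α j : ℕ) : ℕ)) : ℝ) ≠ 0 := by
        have : 0 < (β j : ℕ) - (α j : ℕ) := by omega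
        exact_mod_cast this.ne'
      push_cast
      field_simp
    rw [Finset.sum_congr rfl hterm, ← Finset.sum_mul]
    have hsumc : ∑ j ∈ T, (((β j : ℕ) - (α j : ℕ) : ℕ) : ℝ) = ((m + 2 : ℕ) : ℝ) := by
      have h1 : ∑ j ∈ T, ((β j : ℕ) - (α j : ℕ)) = ∑ j, ((β j : ℕ) - (α j : ℕ)) := by
        apply Finset.sum_subset (Finset.subset_univ T)
        intro x _ hx
        rw [hT, Finset.mem_filter] at hx
        push_neg at hx
        have := hx (Finset.mem_univ x)
        have := hab x
        omega
      have h2 : ∑ j, ((β j : ℕ) - (α j : ℕ)) = m + 2 := by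
        rw [Finset.sum_tsub_distrib _ (fun i _ => hab i)]; omega
      rw [← Nat.cast_sum, h1, h2]
    rw [hsumc]
    have hprodne : (∏ i, ((((β i : ℕ) - (α i : ℕ)).factorial : ℕ) : ℝ)) ≠ 0 :=
      Finset.prod_ne_zero_iff.mpr (fun i _ => by exact_mod_cast (Nat.factorial_pos _).ne')
    rw [Nat.factorial_succ (m + 1)]
    push_cast
    rw [mul_div_assoc]
    ring

end Stmt7Aux

/-- `Ev_{d,w} = (1/(w-d)!) · U_{d,d+1} ⋯ U_{w-1,w} · diag_w`, where
`diag_w = diag(α! : wt(α) = w)`. -/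
theorem stmt_7 (n : ℕ) (k : Fin n → ℕ) (hk : ∀ i, 2 ≤ k i)
    (N : ℕ) (hN : N = ∑ i, (k i - 1)) (d w : ℕ) (hdw : d < w) (hw : w ≤ N) :
    EvMat n k d w =
      ((Nat.factorial (w - d) : ℝ))⁻¹ •
        (((List.range (w - d)).map (fun s => Umat n k (d + s))).prod *
          Matrix.diagonal (fun β : ∀ i, Fin (k i) =>
            if (∑ i, (β i : ℕ)) = w then ((∏ i, Nat.factorial (β i : ℕ) : ℕ) : ℝ) else 0)) := by
  obtain ⟨m, hm⟩ : ∃ m, w - d = m + 1 := ⟨w - d - 1, by omega⟩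
  have hwdm : w = d + (m + 1) := by omega
  ext α β
  rw [Matrix.smul_apply, Matrix.mul_diagonal, hm, Stmt7Aux.key d m α β]
  show EvMat n k d w α β = _
  unfold EvMat
  rw [Stmt7Aux.Yeval_eq]
  by_cases hα : (∑ i, (α i : ℕ)) = d
  swap
  · rw [if_neg (by tauto), if_neg (by tauto)]
    simp
  by_cases hβ : (∑ i, (β i : ℕ)) = w
  swap
  · rw [if_neg (by tauto), if_neg (by intro h; exact hβ (by omega)), if_neg hβ]
    simp
  by_cases hab : ∀ i, (α i : ℕ) ≤ (β i : ℕ)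
  swap
  · rw [if_pos ⟨hα, hβ⟩, if_neg (by tauto)]
    push_neg at hab
    obtain ⟨j, hj⟩ := hab
    rw [Finset.prod_eq_zero (Finset.mem_univ j)]
    · simp
    · have : Nat.descFactorial (β j : ℕ) (α j : ℕ) = 0 :=
        Nat.descFactorial_eq_zero_iff_lt.mpr hj
      simp [this]
  · rw [if_pos ⟨hα, hβ⟩, if_pos ⟨hα, by omega, hab⟩, if_pos hβ]
    have hfac : ∀ i, (((β i : ℕ) - (α i : ℕ)).factorial : ℝ) *
        (Nat.descFactorial (β i : ℕ) (α i : ℕ) : ℝ) = ((β i : ℕ).factorial : ℝ) := by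
      intro i
      exact_mod_cast congrArg (Nat.cast (R := ℝ))
        (Nat.factorial_mul_descFactorial (hab i))
    have hprodβ : ((∏ i, Nat.factorial (β i : ℕ) : ℕ) : ℝ) =
        (∏ i, (((β i : ℕ) - (α i : ℕ)).factorial : ℝ)) *
          ∏ i, (Nat.descFactorial (β i : ℕ) (α i : ℕ) : ℝ) := by
      push_cast
      rw [← Finset.prod_mul_distrib]
      exact Finset.prod_congr rfl fun i _ => (hfac i).symm
    rw [hprodβ]
    have hFne : (((m + 1).factorial : ℕ) : ℝ) ≠ 0 := by
      exact_mod_cast (Nat.factorial_pos _).ne'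
    have hprodne : (∏ i, ((((β i : ℕ) - (α i : ℕ)).factorial : ℕ) : ℝ)) ≠ 0 :=
      Finset.prod_ne_zero_iff.mpr (fun i _ => by exact_mod_cast (Nat.factorial_pos _).ne')
    field_simp
    rw [smul_eq_mul]
    field_simp
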